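/- Let f : N → C satisfy f(u² + 3v²) = f(u)² + 3·f(v)² for all positive integers u, v. Then one of the following holds: (1) f(n) = 0 for every positive integer n; (2) for every positive integer n, f(n) = n whenever there exist positive integers u, v with n = u² + 3v², and f(n) = n or f(n) = −n otherwise; (3) for every positive integer n, f(n) = 1/4 whenever there exist positive integers u, v with n = u² + 3v², and f(n) = 1/4 or f(n) = −1/4 otherwise. -/

import Mathlib

/-!
Collisions `u² + 3v² = u'² + 3v'²` between representations force
`f u ² + 3 f v ² = f u' ² + 3 f v' ²`. The family
`(j + 7)² + 3 (j + 3)² = (j + 1)² + 3 (j + 5)²` turns this into a linear recurrence for `f ²`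
which determines it from its values at `1, …, 6`. A handful of further collisions (at `28`,
`52`, `76`, `84`, `196`) show that these values lie on the quadratic
`(a (16 a - 1) n² + 16 a (1 - a)) / 15`, where `a = f 1 ²`, a combination of the two obvious
solutions `n²` and `1` of the recurrence, and force `a (16 a - 1) (a - 1) = 0`; the three roots
give `f ² = 0`, `f n ² = n ²` and `f ² = 1/16`.
Finally `f (u² + 3v²) = f u ² + 3 f v ²` fixes the sign of `f` on representable numbers.
-/

variable {R : Type*}

def PreservesForm [Semiring R] (f : ℕ → R) : Prop :=
  ∀ u v : ℕ, 0 < u → 0 < v → f (u ^ 2 + 3 * v ^ 2) = f u ^ 2 + 3 * f v ^ 2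

def FormRecurrence [CommRing R] (g : ℕ → R) : Prop :=
  ∀ j : ℕ, g (j + 7) + 3 * g (j + 3) = g (j + 1) + 3 * g (j + 5)

theorem formRecurrence_quadratic [CommRing R] (c d : R) :
    FormRecurrence fun n : ℕ => c * (n : R) ^ 2 + d := by
  intro j
  push_cast
  ring

theorem FormRecurrence.eqOn_Ici_of_eqOn_Icc [CommRing R] {g G : ℕ → R}
    (hg : FormRecurrence g) (hG : FormRecurrence G) (hbase : Set.EqOn g G (Set.Icc 1 6)) :
    Set.EqOn g G (Set.Ici 1) := by
  intro n hn
  induction n using Nat.strong_induction_on with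
  | _ n ih =>
    rcases le_or_gt n 6 with hn6 | hn6
    · exact hbase ⟨hn, hn6⟩
    · obtain ⟨j, rfl⟩ : ∃ j, n = j + 7 := ⟨n - 7, by omega⟩
      have h1 := ih (j + 1) (by omega) (by simp)
      have h3 := ih (j + 3) (by omega) (by simp)
      have h5 := ih (j + 5) (by omega) (by simp)
      linear_combination hg j - hG j + h1 + 3 * h5 - 3 * h3

namespace PreservesForm

section Semiring

variable [Semiring R] {f : ℕ → R}

theorem sq_add_three_mul_sq_eq (hf : PreservesForm f) (u v u' v' : ℕ)
    (h : u ^ 2 + 3 * v ^ 2 = u' ^ 2 + 3 * v' ^ 2 := by norm_num)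
    (hu : 0 < u := by positivity) (hv : 0 < v := by positivity)
    (hu' : 0 < u' := by positivity) (hv' : 0 < v' := by positivity) :
    f u ^ 2 + 3 * f v ^ 2 = f u' ^ 2 + 3 * f v' ^ 2 := by
  rw [← hf u v hu hv, h, hf u' v' hu' hv']

end Semiring

section CommRing

variable [CommRing R] {f : ℕ → R}

theorem formRecurrence_sq (hf : PreservesForm f) :
    FormRecurrence fun n => f n ^ 2 :=
  fun j => hf.sq_add_three_mul_sq_eq (j + 7) (j + 3) (j + 1) (j + 5) (by ring)

theorem apply_four (hf : PreservesForm f) : f 4 = 4 * f 1 ^ 2 := by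
  simpa using (hf 1 1 one_pos one_pos).trans (by ring)

theorem apply_seven (hf : PreservesForm f) : f 7 = f 2 ^ 2 + 3 * f 1 ^ 2 := by
  simpa using hf 2 1 two_pos one_pos

theorem sq_relation_fifty_two (hf : PreservesForm f) :
    (f 2 ^ 2 + 3 * f 1 ^ 2) ^ 2 + 3 * f 1 ^ 2 = f 2 ^ 2 + 3 * (4 * f 1 ^ 2) ^ 2 := by
  simpa only [hf.apply_four, hf.apply_seven] using hf.sq_add_three_mul_sq_eq 7 1 2 4

end CommRing

variable {K : Type*} [Field K] [CharZero K] {f : ℕ → K}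

theorem sq_two_three_five (hf : PreservesForm f) :
    f 2 ^ 2 = (16 * (f 1 ^ 2) ^ 2 + 4 * f 1 ^ 2) / 5 ∧
    f 3 ^ 2 = (128 * (f 1 ^ 2) ^ 2 + 7 * f 1 ^ 2) / 15 ∧
    f 5 ^ 2 = (128 * (f 1 ^ 2) ^ 2 - 3 * f 1 ^ 2) / 5 := by
  have h28 := hf.sq_add_three_mul_sq_eq 4 2 1 3
  have h28' := hf.sq_add_three_mul_sq_eq 4 2 5 1
  have h76 := hf.sq_add_three_mul_sq_eq 7 3 1 5
  rw [hf.apply_four] at h28 h28'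
  rw [hf.apply_seven] at h76
  have h2 : f 2 ^ 2 = (16 * (f 1 ^ 2) ^ 2 + 4 * f 1 ^ 2) / 5 := by
    linear_combination (hf.sq_relation_fifty_two - h76 - h28 + 3 * h28') / 5
  exact ⟨h2, by linear_combination (-5 * h28 + 15 * h2) / 15,
    by linear_combination (-5 * h28' + 15 * h2) / 5⟩

theorem sq_eqOn_Icc (hf : PreservesForm f) :
    Set.EqOn (fun n => f n ^ 2)
      (fun n : ℕ => f 1 ^ 2 * (16 * f 1 ^ 2 - 1) / 15 * (n : K) ^ 2 + 16 * f 1 ^ 2 * (1 - f 1 ^ 2) / 15)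
      (Set.Icc 1 6) := by
  obtain ⟨h2, h3, h5⟩ := hf.sq_two_three_five
  rintro i ⟨hi1, hi6⟩
  interval_cases i <;> simp only [Nat.cast_ofNat, Nat.cast_one]
  · ring
  · rw [h2]; ring
  · rw [h3]; ring
  · rw [hf.apply_four]; ring
  · rw [h5]; ring
  · have h84 := hf.sq_add_three_mul_sq_eq 6 4 9 1
    have h156 := hf.sq_add_three_mul_sq_eq 9 5 3 7
    have h52 := hf.sq_relation_fifty_two
    rw [hf.apply_four] at h84
    rw [hf.apply_seven, h3, h5, h2] at h156
    rw [h2] at h52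
    linear_combination h84 + h156 + 3 * h52

theorem sq_eqOn_Ici (hf : PreservesForm f) :
    Set.EqOn (fun n => f n ^ 2)
      (fun n : ℕ => f 1 ^ 2 * (16 * f 1 ^ 2 - 1) / 15 * (n : K) ^ 2 + 16 * f 1 ^ 2 * (1 - f 1 ^ 2) / 15)
      (Set.Ici 1) :=
  hf.formRecurrence_sq.eqOn_Ici_of_eqOn_Icc (formRecurrence_quadratic _ _) hf.sq_eqOn_Icc

theorem sq_one_eq (hf : PreservesForm f) :
    f 1 ^ 2 = 0 ∨ f 1 ^ 2 = 1 ∨ f 1 ^ 2 = 1 / 16 := by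
  obtain ⟨h2, h3, -⟩ := hf.sq_two_three_five
  have h13 : f 13 = f 1 ^ 2 + 3 * f 2 ^ 2 := by simpa using hf 1 2 one_pos two_pos
  have h196 := hf.sq_add_three_mul_sq_eq 7 7 13 3
  have h52 := hf.sq_relation_fifty_two
  rw [hf.apply_seven, h13, h2, h3] at h196
  rw [h2] at h52
  -- after substitution they amount to `a (a - 1) (16 a - 1) (16 a + 55) = 0` and
  -- `a (a - 1) (16 a - 1) (16 a + 7) = 0`
  have hcubic : f 1 ^ 2 * ((f 1 ^ 2 - 1) * (f 1 ^ 2 - 1 / 16)) = 0 := by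
    linear_combination (25 * h52 + 5 * h196) / 768
  simpa only [mul_eq_zero, sub_eq_zero] using hcubic

theorem sq_trichotomy (hf : PreservesForm f) :
    (∀ n, 1 ≤ n → f n = 0) ∨ (∀ n, 1 ≤ n → f n ^ 2 = (n : K) ^ 2) ∨
      (∀ n, 1 ≤ n → f n ^ 2 = 1 / 16) := by
  have hsq n (hn : 1 ≤ n) := hf.sq_eqOn_Ici (Set.mem_Ici.mpr hn)
  rcases hf.sq_one_eq with h | h | h <;> norm_num [h] at hsq
  exacts [Or.inl hsq, Or.inr (Or.inl hsq), Or.inr (Or.inr hsq)]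

end PreservesForm

theorem conjecture_k3 (f : ℕ → ℂ)
    (hf : ∀ u v : ℕ, 0 < u → 0 < v →
      f (u ^ 2 + 3 * v ^ 2) = f u ^ 2 + 3 * f v ^ 2) :
    (∀ n : ℕ, 1 ≤ n → f n = 0) ∨
    (∀ n : ℕ, 1 ≤ n →
      ((∃ u v : ℕ, 0 < u ∧ 0 < v ∧ n = u ^ 2 + 3 * v ^ 2) → f n = (n : ℂ)) ∧
      (¬ (∃ u v : ℕ, 0 < u ∧ 0 < v ∧ n = u ^ 2 + 3 * v ^ 2) → f n = (n : ℂ) ∨ f n = -(n : ℂ))) ∨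
    (∀ n : ℕ, 1 ≤ n →
      ((∃ u v : ℕ, 0 < u ∧ 0 < v ∧ n = u ^ 2 + 3 * v ^ 2) → f n = 1 / 4) ∧
      (¬ (∃ u v : ℕ, 0 < u ∧ 0 < v ∧ n = u ^ 2 + 3 * v ^ 2) → f n = 1 / 4 ∨ f n = -(1 / 4))) := by
  rcases (show PreservesForm f from hf).sq_trichotomy with h | h | h
  · exact Or.inl h
  · refine Or.inr (Or.inl fun n hn => ⟨?_, fun _ => sq_eq_sq_iff_eq_or_eq_neg.mp (h n hn)⟩)
    rintro ⟨u, v, hu, hv, rfl⟩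
    rw [hf u v hu hv, h u hu, h v hv]
    push_cast
    ring
  · refine Or.inr (Or.inr fun n hn => ⟨?_, fun _ => sq_eq_sq_iff_eq_or_eq_neg.mp ?_⟩)
    · rintro ⟨u, v, hu, hv, rfl⟩
      rw [hf u v hu hv, h u hu, h v hv]
      norm_num
    · rw [h n hn]
      norm_num
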